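/- Weak modal refinement is preserved by adding output queues: for MIOs S and S' with the same signature and any subset o of their output actions, if S' ≤_m* S then Ω_o(S') ≤_m* Ω_o(S). -/

import Mathlib

/-- A modal I/O-transition system (MIO): states, an initial state, a signature of
input, output and internal actions (pairwise disjoint subsets of the action
universe `A`), may-transitions and must-transitions with must ⊆ may. -/
structure MIO (A : Type) where
  State : Type
  start : State
  inp : Set A
  out : Set A
  intl : Set A
  may : State → A → State → Prop
  must : State → A → State → Prop
  inp_out : ∀ a, a ∈ inp → a ∈ out → False
  inp_intl : ∀ a, a ∈ inp → a ∈ intl → False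
  out_intl : ∀ a, a ∈ out → a ∈ intl → False
  must_sub : ∀ s a s', must s a s' → may s a s'

namespace MIO

variable {A B : Type}

/-- The set of all actions of a MIO. -/
def act (S : MIO A) : Set A := S.inp ∪ S.out ∪ S.intl

/-- Two MIOs have the same signature. -/
def SigEq (S T : MIO A) : Prop := S.inp = T.inp ∧ S.out = T.out ∧ S.intl = T.intl

/-- Strong modal refinement `S ≤_m T`. -/
def StrongRefines (S T : MIO A) : Prop :=
  SigEq S T ∧
  ∃ R : S.State → T.State → Prop, R S.start T.start ∧
    ∀ s t, R s t →
      (∀ a t', T.must t a t' → ∃ s', S.must s a s' ∧ R s' t') ∧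
      (∀ a s', S.may s a s' → ∃ t', T.may t a t' ∧ R s' t')

/-- One internal must-transition. -/
def tauMust (S : MIO A) (s s' : S.State) : Prop := ∃ a ∈ S.intl, S.must s a s'

/-- Finitely many (possibly zero) internal must-transitions. -/
def tauMustStar (S : MIO A) : S.State → S.State → Prop := Relation.ReflTransGen S.tauMust

/-- One internal may-transition. -/
def tauMay (S : MIO A) (s s' : S.State) : Prop := ∃ a ∈ S.intl, S.may s a s'

/-- Finitely many (possibly zero) internal may-transitions. -/
def tauMayStar (S : MIO A) : S.State → S.State → Prop := Relation.ReflTransGen S.tauMay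

/-- Weak modal refinement `S ≤_m* T`. -/
def WeakRefines (S T : MIO A) : Prop :=
  SigEq S T ∧
  ∃ R : S.State → T.State → Prop, R S.start T.start ∧
    ∀ s t, R s t →
      (∀ a ∈ T.inp ∪ T.out, ∀ t', T.must t a t' →
        ∃ s1 s2 s', S.tauMustStar s s1 ∧ S.must s1 a s2 ∧ S.tauMustStar s2 s' ∧ R s' t') ∧
      (∀ a ∈ T.intl, ∀ t', T.must t a t' → ∃ s', S.tauMustStar s s' ∧ R s' t') ∧
      (∀ a ∈ S.inp ∪ S.out, ∀ s', S.may s a s' →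
        ∃ t1 t2 t', T.tauMayStar t t1 ∧ T.may t1 a t2 ∧ T.tauMayStar t2 t' ∧ R s' t') ∧
      (∀ a ∈ S.intl, ∀ s', S.may s a s' → ∃ t', T.tauMayStar t t' ∧ R s' t')

/-- Shared actions of two MIOs. -/
def shared (S T : MIO A) : Set A := S.act ∩ T.act

/-- Two MIOs are (syntactically) composable if their actions overlap only on
complementary types. -/
def Composable (S T : MIO A) : Prop :=
  shared S T ⊆ (S.inp ∩ T.out) ∪ (T.inp ∩ S.out)

/-- Synchronous composition `S ⊗_sy T` of composable MIOs. -/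
def syncComp (S T : MIO A) (_h : Composable S T) : MIO A where
  State := S.State × T.State
  start := (S.start, T.start)
  inp := (S.inp ∪ T.inp) \ shared S T
  out := (S.out ∪ T.out) \ shared S T
  intl := S.intl ∪ T.intl ∪ shared S T
  may p a p' :=
    (a ∈ shared S T ∧ S.may p.1 a p'.1 ∧ T.may p.2 a p'.2) ∨
    (a ∈ S.act ∧ a ∉ shared S T ∧ S.may p.1 a p'.1 ∧ p'.2 = p.2) ∨
    (a ∈ T.act ∧ a ∉ shared S T ∧ T.may p.2 a p'.2 ∧ p'.1 = p.1)
  must p a p' :=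
    (a ∈ shared S T ∧ S.must p.1 a p'.1 ∧ T.must p.2 a p'.2) ∨
    (a ∈ S.act ∧ a ∉ shared S T ∧ S.must p.1 a p'.1 ∧ p'.2 = p.2) ∨
    (a ∈ T.act ∧ a ∉ shared S T ∧ T.must p.2 a p'.2 ∧ p'.1 = p.1)
  inp_out := by
    intro a ha hb
    have h1 := S.inp_out a; have h2 := T.inp_out a
    simp only [Set.mem_diff, Set.mem_union, shared, act, Set.mem_inter_iff] at ha hb
    tauto
  inp_intl := by
    intro a ha hb
    have h1 := S.inp_intl a; have h2 := T.inp_intl a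
    simp only [Set.mem_diff, Set.mem_union, shared, act, Set.mem_inter_iff] at ha hb
    tauto
  out_intl := by
    intro a ha hb
    have h1 := S.out_intl a; have h2 := T.out_intl a
    simp only [Set.mem_diff, Set.mem_union, shared, act, Set.mem_inter_iff] at ha hb
    tauto
  must_sub := by
    rintro p a p' (⟨h1, h2, h3⟩ | ⟨h1, h2, h3, h4⟩ | ⟨h1, h2, h3, h4⟩)
    · exact Or.inl ⟨h1, S.must_sub _ _ _ h2, T.must_sub _ _ _ h3⟩
    · exact Or.inr (Or.inl ⟨h1, h2, S.must_sub _ _ _ h3, h4⟩)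
    · exact Or.inr (Or.inr ⟨h1, h2, T.must_sub _ _ _ h3, h4⟩)

/-- Reachability (w.r.t. may-transitions) from the initial state. -/
def Reachable (M : MIO A) (s : M.State) : Prop :=
  Relation.ReflTransGen (fun x y => ∃ a, M.may x a y) M.start s

/-- Strong modal compatibility `S ⇄_sc T`. -/
def StrongCompat (S T : MIO A) : Prop :=
  ∃ h : Composable S T,
    ∀ p : S.State × T.State, (syncComp S T h).Reachable p →
      (∀ a ∈ S.out ∩ T.inp, ∀ s', S.may p.1 a s' → ∃ t', T.must p.2 a t') ∧
      (∀ a ∈ T.out ∩ S.inp, ∀ t', T.may p.2 a t' → ∃ s', S.must p.1 a s')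

/-- Weak modal compatibility `S ⇄_wc T`. -/
def WeakCompat (S T : MIO A) : Prop :=
  ∃ h : Composable S T,
    ∀ p : S.State × T.State, (syncComp S T h).Reachable p →
      (∀ a ∈ S.out ∩ T.inp, ∀ s', S.may p.1 a s' →
        ∃ t1 t', T.tauMustStar p.2 t1 ∧ T.must t1 a t') ∧
      (∀ a ∈ T.out ∩ S.inp, ∀ t', T.may p.2 a t' →
        ∃ s1 s', S.tauMustStar p.1 s1 ∧ S.must s1 a s')

/-- Finite executions: `Trace M s as s'` means `M` can go from `s` to `s'` by
a sequence of may-transitions labelled by the list of actions `as`. -/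
inductive Trace (M : MIO A) : M.State → List A → M.State → Prop
  | nil (s : M.State) : Trace M s [] s
  | cons {s s' s'' : M.State} {a : A} {as : List A} :
      M.may s a s' → Trace M s' as s'' → Trace M s (a :: as) s''

/-- Renaming the actions of a MIO along an injective function. -/
def rename (f : A → B) (hf : Function.Injective f) (S : MIO A) : MIO B where
  State := S.State
  start := S.start
  inp := f '' S.inp
  out := f '' S.out
  intl := f '' S.intl
  may s b s' := ∃ a, b = f a ∧ S.may s a s'
  must s b s' := ∃ a, b = f a ∧ S.must s a s'
  inp_out := by
    rintro b ⟨a1, h1, rfl⟩ ⟨a2, h2, heq⟩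
    obtain rfl := hf heq
    exact S.inp_out a2 h1 h2
  inp_intl := by
    rintro b ⟨a1, h1, rfl⟩ ⟨a2, h2, heq⟩
    obtain rfl := hf heq
    exact S.inp_intl a2 h1 h2
  out_intl := by
    rintro b ⟨a1, h1, rfl⟩ ⟨a2, h2, heq⟩
    obtain rfl := hf heq
    exact S.out_intl a2 h1 h2
  must_sub := by
    rintro s b s' ⟨a, rfl, h⟩
    exact ⟨a, rfl, S.must_sub _ _ _ h⟩

-- Tagging function: actions in `o` become the fresh "queue input" actions `n^▷`
-- (encoded as `Sum.inr n`), all other actions are kept (as `Sum.inl a`).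
open Classical in
noncomputable def tagged (o : Set A) : A → A ⊕ A :=
  fun a => if a ∈ o then Sum.inr a else Sum.inl a

theorem tagged_injective (o : Set A) : Function.Injective (tagged o) := by
  classical
  intro a b h
  by_cases ha : a ∈ o <;> by_cases hb : b ∈ o <;>
    simp [tagged, ha, hb] at h <;> tauto

/-- The queue MIO `Q_o`: a FIFO buffer for messages in `o`. States are finite
strings over `A` (with reachable states being strings over `o`), inputs are the
tagged actions `n^▷ = Sum.inr n`, outputs the actions `n = Sum.inl n` for `n ∈ o`.
Enqueue at the front, dequeue from the back; may- and must-transitions coincide. -/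
def queueMIO (o : Set A) : MIO (A ⊕ A) where
  State := List A
  start := []
  inp := Sum.inr '' o
  out := Sum.inl '' o
  intl := ∅
  may s b s' :=
    (∃ n ∈ o, b = Sum.inr n ∧ s' = n :: s) ∨ (∃ n ∈ o, b = Sum.inl n ∧ s = s' ++ [n])
  must s b s' :=
    (∃ n ∈ o, b = Sum.inr n ∧ s' = n :: s) ∨ (∃ n ∈ o, b = Sum.inl n ∧ s = s' ++ [n])
  inp_out := by rintro b ⟨n, hn, rfl⟩ ⟨m, hm, h⟩; simp at h
  inp_intl := by rintro b _ h; simp at h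
  out_intl := by rintro b _ h; simp at h
  must_sub := fun _ _ _ h => h

theorem omega_composable (o : Set A) (S : MIO A) (ho : o ⊆ S.out) :
    Composable (rename (tagged o) (tagged_injective o) S) (queueMIO o) := by
  classical
  rintro b ⟨hb1, hb2⟩
  have hq : (∃ n ∈ o, Sum.inr n = b) ∨ (∃ n ∈ o, Sum.inl n = b) := by
    simpa [queueMIO, act, Set.image, Set.mem_union] using hb2
  have hr : ∃ a, ((a ∈ S.inp ∨ a ∈ S.out) ∨ a ∈ S.intl) ∧ tagged o a = b := by
    simpa [rename, act, ← Set.image_union] using hb1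
  obtain ⟨a, _, ha⟩ := hr
  rcases hq with ⟨n, hn, hb⟩ | ⟨n, hn, hb⟩
  · right
    constructor
    · exact ⟨n, hn, hb⟩
    · refine ⟨n, ho hn, ?_⟩
      rw [← hb]; simp [tagged, hn]
  · exfalso
    rw [← hb] at ha
    by_cases h : a ∈ o
    · simp [tagged, h] at ha
    · simp [tagged, h] at ha
      exact h (ha ▸ hn)

/-- `Ω_o(S)`: the MIO `S` with an output queue for `o ⊆ out_S`, i.e. the
synchronous product of the renamed MIO `S_o^▷` with the queue MIO `Q_o`. -/
noncomputable def Omega (o : Set A) (S : MIO A) (ho : o ⊆ S.out) : MIO (A ⊕ A) :=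
  syncComp (rename (tagged o) (tagged_injective o) S) (queueMIO o) (omega_composable o S ho)

/-- The outputs of `S` that are inputs of `T`. -/
def oOf (S T : MIO A) : Set A := S.out ∩ T.inp

/-- `Ω_{o_S}(S)` where `o_S = out_S ∩ in_T`. -/
noncomputable def OmegaC (S T : MIO A) : MIO (A ⊕ A) :=
  Omega (oOf S T) S Set.inter_subset_left

/-- Composability of the queue-extended MIOs, i.e. definedness of `S ⊗_as T`. -/
def AsyncComposable (S T : MIO A) : Prop := Composable (OmegaC S T) (OmegaC T S)

/-- Asynchronous composition `S ⊗_as T = Ω_{o_S}(S) ⊗_sy Ω_{o_T}(T)`. -/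
noncomputable def asyncComp (S T : MIO A) (h : AsyncComposable S T) : MIO (A ⊕ A) :=
  syncComp (OmegaC S T) (OmegaC T S) h

/-- Asynchronous modal compatibility `S ⇄_ac T`. -/
def AsyncCompat (S T : MIO A) : Prop :=
  Composable S T ∧ WeakCompat (OmegaC S T) (OmegaC T S)

end MIO

/-!
`Ω_o(S)` is obtained from `S` by an injective renaming followed by a synchronous product with
the queue `Q_o`, which does not depend on `S`. Both operations are monotone for `≤_m*`: a
renaming maps weak transitions to weak transitions, and in a product an internal step of one
component stays internal while a synchronisation on a shared action becomes internal, so weak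
transitions of the components interleave into weak transitions of the product.
-/

namespace MIO

variable {A B X Y : Type}

section WeakSimulation

variable {intl : Set A} {step : X → A → X → Prop}

variable (intl step) in
def TauStar : X → X → Prop :=
  Relation.ReflTransGen fun x x' => ∃ a ∈ intl, step x a x'

/-- For internal `a` the first disjunct allows a move made of internal steps only. -/
def WeakMove (intl : Set A) (step : X → A → X → Prop) (x : X) (a : A) (x' : X) : Prop :=
  (a ∈ intl ∧ TauStar intl step x x') ∨
    ∃ x₁ x₂, TauStar intl step x x₁ ∧ step x₁ a x₂ ∧ TauStar intl step x₂ x'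

def IsWeakSim (acts intl : Set A) (stepX : X → A → X → Prop) (stepY : Y → A → Y → Prop)
    (R : X → Y → Prop) : Prop :=
  ∀ x y, R x y → ∀ a ∈ acts, ∀ x', stepX x a x' → ∃ y', WeakMove intl stepY y a y' ∧ R x' y'

theorem TauStar.map {intl' : Set B} {step' : Y → B → Y → Prop} (f : X → Y)
    (hτ : ∀ c ∈ intl, ∀ x x', step x c x' → ∃ c' ∈ intl', step' (f x) c' (f x'))
    {x x' : X} (h : TauStar intl step x x') : TauStar intl' step' (f x) (f x') :=
  h.lift f fun _ _ ⟨c, hc, hstep⟩ => hτ c hc _ _ hstep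

theorem WeakMove.single {x x' : X} {a : A} (h : step x a x') : WeakMove intl step x a x' :=
  Or.inr ⟨x, x', .refl, h, .refl⟩

theorem WeakMove.tauStar {x x' : X} {a : A} (ha : a ∈ intl) (h : WeakMove intl step x a x') :
    TauStar intl step x x' := by
  rcases h with ⟨-, h⟩ | ⟨x₁, x₂, h₁, hstep, h₂⟩
  · exact h
  · exact (h₁.tail ⟨a, ha, hstep⟩).trans h₂

theorem WeakMove.exists_of_notMem {x x' : X} {a : A} (ha : a ∉ intl)
    (h : WeakMove intl step x a x') :
    ∃ x₁ x₂, TauStar intl step x x₁ ∧ step x₁ a x₂ ∧ TauStar intl step x₂ x' :=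
  h.resolve_left fun h => ha h.1

theorem WeakMove.map {intl' : Set B} {step' : Y → B → Y → Prop} (f : X → Y) {a : A} {b : B}
    (hτ : ∀ c ∈ intl, ∀ x x', step x c x' → ∃ c' ∈ intl', step' (f x) c' (f x'))
    (hstep : ∀ x x', step x a x' → step' (f x) b (f x')) (hb : a ∈ intl → b ∈ intl')
    {x x' : X} (h : WeakMove intl step x a x') : WeakMove intl' step' (f x) b (f x') := by
  rcases h with ⟨ha, h⟩ | ⟨x₁, x₂, h₁, h, h₂⟩
  · exact Or.inl ⟨hb ha, h.map f hτ⟩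
  · exact Or.inr ⟨f x₁, f x₂, h₁.map f hτ, hstep _ _ h, h₂.map f hτ⟩

theorem IsWeakSim.mono {acts acts' : Set A} {stepX : X → A → X → Prop}
    {stepY : Y → A → Y → Prop} {R : X → Y → Prop} (h : IsWeakSim acts intl stepX stepY R)
    (hacts : acts' ⊆ acts) : IsWeakSim acts' intl stepX stepY R :=
  fun x y hxy a ha => h x y hxy a (hacts ha)

theorem IsWeakSim.refl {acts : Set A} : IsWeakSim acts intl step step Eq := by
  rintro x _ rfl a - x' hstep
  exact ⟨x', .single hstep, rfl⟩

theorem IsWeakSim.map {acts : Set A} {stepX : X → A → X → Prop} {R : X → Y → Prop}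
    {stepY : Y → A → Y → Prop} {g : A → B} (hg : Function.Injective g)
    (h : IsWeakSim acts intl stepX stepY R) :
    IsWeakSim (g '' acts) (g '' intl) (fun x b x' => ∃ a, b = g a ∧ stepX x a x')
      (fun y b y' => ∃ a, b = g a ∧ stepY y a y') R := by
  rintro x y hxy _ ⟨a, ha, rfl⟩ x' ⟨a', heq, hstep⟩
  obtain rfl := hg heq
  obtain ⟨y', hmove, hR⟩ := h x y hxy a ha x' hstep
  refine ⟨y', hmove.map id ?_ (fun _ _ h => ⟨a, rfl, h⟩) (Set.mem_image_of_mem g), hR⟩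
  exact fun c hc _ _ h => ⟨g c, Set.mem_image_of_mem g hc, c, rfl, h⟩

theorem isWeakSim_union_iff {vis : Set A} {stepX : X → A → X → Prop}
    {stepY : Y → A → Y → Prop} {R : X → Y → Prop} (hdisj : ∀ a ∈ vis, a ∉ intl) :
    IsWeakSim (vis ∪ intl) intl stepX stepY R ↔ ∀ x y, R x y →
      (∀ a ∈ vis, ∀ x', stepX x a x' → ∃ y₁ y₂ y', TauStar intl stepY y y₁ ∧
        stepY y₁ a y₂ ∧ TauStar intl stepY y₂ y' ∧ R x' y') ∧
      (∀ a ∈ intl, ∀ x', stepX x a x' → ∃ y', TauStar intl stepY y y' ∧ R x' y') := by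
  refine forall₂_congr fun x y => imp_congr_right fun _ => ?_
  refine ⟨fun h => ⟨fun a ha x' hstep => ?_, fun a ha x' hstep => ?_⟩, ?_⟩
  · obtain ⟨y', hmove, hR⟩ := h a (Or.inl ha) x' hstep
    obtain ⟨y₁, y₂, h₁, hstep', h₂⟩ := hmove.exists_of_notMem (hdisj a ha)
    exact ⟨y₁, y₂, y', h₁, hstep', h₂, hR⟩
  · obtain ⟨y', hmove, hR⟩ := h a (Or.inr ha) x' hstep
    exact ⟨y', hmove.tauStar ha, hR⟩
  · rintro ⟨hvis, hintl⟩ a (ha | ha) x' hstep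
    · obtain ⟨y₁, y₂, y', h₁, hstep', h₂, hR⟩ := hvis a ha x' hstep
      exact ⟨y', Or.inr ⟨y₁, y₂, h₁, hstep', h₂⟩, hR⟩
    · obtain ⟨y', hτ, hR⟩ := hintl a ha x' hstep
      exact ⟨y', Or.inl ⟨ha, hτ⟩, hR⟩

end WeakSimulation

section SyncStep

variable {X₁ X₂ Y₁ Y₂ : Type} {act₁ act₂ intl₁ intl₂ : Set A}
  {step₁ : X₁ → A → X₁ → Prop} {step₂ : X₂ → A → X₂ → Prop}

variable (act₁ act₂ step₁ step₂) in
def syncStep (p : X₁ × X₂) (a : A) (p' : X₁ × X₂) : Prop :=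
  (a ∈ act₁ ∩ act₂ ∧ step₁ p.1 a p'.1 ∧ step₂ p.2 a p'.2) ∨
  (a ∈ act₁ ∧ a ∉ act₁ ∩ act₂ ∧ step₁ p.1 a p'.1 ∧ p'.2 = p.2) ∨
  (a ∈ act₂ ∧ a ∉ act₁ ∩ act₂ ∧ step₂ p.2 a p'.2 ∧ p'.1 = p.1)

theorem syncStep_of_left {a : A} (ha : a ∈ act₁ \ act₂) {x x' : X₁} (h : step₁ x a x')
    (z : X₂) : syncStep act₁ act₂ step₁ step₂ (x, z) a (x', z) :=
  Or.inr (Or.inl ⟨ha.1, fun h' => ha.2 h'.2, h, rfl⟩)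

theorem syncStep_of_right {a : A} (ha : a ∈ act₂ \ act₁) {z z' : X₂} (h : step₂ z a z')
    (x : X₁) : syncStep act₁ act₂ step₁ step₂ (x, z) a (x, z') :=
  Or.inr (Or.inr ⟨ha.1, fun h' => ha.2 h'.1, h, rfl⟩)

theorem TauStar.syncStep_left (hintl : intl₁ ⊆ act₁ \ act₂) {x x' : X₁}
    (h : TauStar intl₁ step₁ x x') (z : X₂) :
    TauStar (intl₁ ∪ intl₂ ∪ act₁ ∩ act₂) (syncStep act₁ act₂ step₁ step₂) (x, z) (x', z) :=
  h.map (·, z) fun c hc _ _ h => ⟨c, .inl (.inl hc), syncStep_of_left (hintl hc) h z⟩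

theorem TauStar.syncStep_right (hintl : intl₂ ⊆ act₂ \ act₁) {z z' : X₂}
    (h : TauStar intl₂ step₂ z z') (x : X₁) :
    TauStar (intl₁ ∪ intl₂ ∪ act₁ ∩ act₂) (syncStep act₁ act₂ step₁ step₂) (x, z) (x, z') :=
  h.map (x, ·) fun c hc _ _ h => ⟨c, .inl (.inr hc), syncStep_of_right (hintl hc) h x⟩

theorem WeakMove.syncStep_left (hintl : intl₁ ⊆ act₁ \ act₂) {a : A} (ha : a ∈ act₁ \ act₂)
    {x x' : X₁} (h : WeakMove intl₁ step₁ x a x') (z : X₂) :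
    WeakMove (intl₁ ∪ intl₂ ∪ act₁ ∩ act₂) (syncStep act₁ act₂ step₁ step₂) (x, z) a (x', z) :=
  h.map (·, z) (fun c hc _ _ h => ⟨c, .inl (.inl hc), syncStep_of_left (hintl hc) h z⟩)
    (fun _ _ h => syncStep_of_left ha h z) fun ha => .inl (.inl ha)

theorem WeakMove.syncStep_right (hintl : intl₂ ⊆ act₂ \ act₁) {a : A} (ha : a ∈ act₂ \ act₁)
    {z z' : X₂} (h : WeakMove intl₂ step₂ z a z') (x : X₁) :
    WeakMove (intl₁ ∪ intl₂ ∪ act₁ ∩ act₂) (syncStep act₁ act₂ step₁ step₂) (x, z) a (x, z') :=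
  h.map (x, ·) (fun c hc _ _ h => ⟨c, .inl (.inr hc), syncStep_of_right (hintl hc) h x⟩)
    (fun _ _ h => syncStep_of_right ha h x) fun ha => .inl (.inr ha)

/-- A synchronisation on a shared action is internal in the product, so the two weak moves
combine into a run of internal steps. -/
theorem WeakMove.syncStep_sync (hintl₁ : intl₁ ⊆ act₁ \ act₂) (hintl₂ : intl₂ ⊆ act₂ \ act₁)
    {a : A} (ha : a ∈ act₁ ∩ act₂) {x x' : X₁} {z z' : X₂} (hx : WeakMove intl₁ step₁ x a x')
    (hz : WeakMove intl₂ step₂ z a z') :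
    WeakMove (intl₁ ∪ intl₂ ∪ act₁ ∩ act₂) (syncStep act₁ act₂ step₁ step₂) (x, z) a (x', z') := by
  obtain ⟨x₁, x₂, hx₁, hx, hx₂⟩ := hx.exists_of_notMem fun h => (hintl₁ h).2 ha.2
  obtain ⟨z₁, z₂, hz₁, hz, hz₂⟩ := hz.exists_of_notMem fun h => (hintl₂ h).2 ha.1
  have before := (hx₁.syncStep_left hintl₁ z).trans (hz₁.syncStep_right hintl₂ x₁)
  have after := (hx₂.syncStep_left hintl₁ z₂).trans (hz₂.syncStep_right hintl₂ x')
  exact .inl ⟨.inr ha, (before.tail ⟨a, .inr ha, .inl ⟨ha, hx, hz⟩⟩).trans after⟩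

theorem IsWeakSim.syncStep {step₁' : Y₁ → A → Y₁ → Prop} {step₂' : Y₂ → A → Y₂ → Prop}
    {R₁ : X₁ → Y₁ → Prop} {R₂ : X₂ → Y₂ → Prop} (h₁ : IsWeakSim act₁ intl₁ step₁ step₁' R₁)
    (h₂ : IsWeakSim act₂ intl₂ step₂ step₂' R₂) (hintl₁ : intl₁ ⊆ act₁ \ act₂)
    (hintl₂ : intl₂ ⊆ act₂ \ act₁) :
    IsWeakSim Set.univ (intl₁ ∪ intl₂ ∪ act₁ ∩ act₂) (syncStep act₁ act₂ step₁ step₂)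
      (syncStep act₁ act₂ step₁' step₂') fun p q => R₁ p.1 q.1 ∧ R₂ p.2 q.2 := by
  rintro ⟨x, z⟩ ⟨y, w⟩ ⟨hxy, hzw⟩ a - ⟨x', z'⟩ hstep
  rcases hstep with ⟨ha, hx, hz⟩ | ⟨ha₁, ha, hx, rfl : z' = z⟩ | ⟨ha₂, ha, hz, rfl : x' = x⟩
  · obtain ⟨y', hy, hxy'⟩ := h₁ x y hxy a ha.1 x' hx
    obtain ⟨w', hw, hzw'⟩ := h₂ z w hzw a ha.2 z' hz
    exact ⟨(y', w'), hy.syncStep_sync hintl₁ hintl₂ ha hw, hxy', hzw'⟩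
  · obtain ⟨y', hy, hxy'⟩ := h₁ x y hxy a ha₁ x' hx
    exact ⟨(y', w), hy.syncStep_left hintl₁ ⟨ha₁, fun h => ha ⟨ha₁, h⟩⟩ w, hxy', hzw⟩
  · obtain ⟨w', hw, hzw'⟩ := h₂ z w hzw a ha₂ z' hz
    exact ⟨(y, w'), hw.syncStep_right hintl₂ ⟨ha₂, fun h => ha ⟨h, ha₂⟩⟩ y, hxy, hzw'⟩

end SyncStep

theorem SigEq.refl (S : MIO A) : SigEq S S := ⟨rfl, rfl, rfl⟩

theorem SigEq.act_eq {S T : MIO A} (h : SigEq S T) : S.act = T.act := by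
  obtain ⟨hinp, hout, hintl⟩ := h
  simp only [act, hinp, hout, hintl]

theorem act_rename (f : A → B) (hf : Function.Injective f) (S : MIO A) :
    (rename f hf S).act = f '' S.act := by
  simp only [act, rename, Set.image_union]

theorem SigEq.rename {S T : MIO A} (h : SigEq S T) (f : A → B) (hf : Function.Injective f) :
    SigEq (rename f hf S) (rename f hf T) := by
  obtain ⟨hinp, hout, hintl⟩ := h
  exact ⟨congrArg (f '' ·) hinp, congrArg (f '' ·) hout, congrArg (f '' ·) hintl⟩

theorem SigEq.syncComp {S' S T' T : MIO A} (hS : SigEq S' S) (hT : SigEq T' T)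
    (hc' : Composable S' T') (hc : Composable S T) :
    SigEq (syncComp S' T' hc') (syncComp S T hc) := by
  have hshared : shared S' T' = shared S T := by rw [shared, shared, hS.act_eq, hT.act_eq]
  obtain ⟨hinpS, houtS, hintlS⟩ := hS
  obtain ⟨hinpT, houtT, hintlT⟩ := hT
  simp only [SigEq, MIO.syncComp, hshared, hinpS, houtS, hintlS, hinpT, houtT, hintlT, and_self]

theorem Composable.symm {S T : MIO A} (h : Composable S T) : Composable T S := by
  rw [Composable, shared, Set.inter_comm, Set.union_comm]
  exact h

theorem Composable.intl_subset {S T : MIO A} (h : Composable S T) : S.intl ⊆ S.act \ T.act := by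
  refine fun a ha => ⟨.inr ha, fun haT => ?_⟩
  rcases h ⟨.inr ha, haT⟩ with ⟨hinp, -⟩ | ⟨-, hout⟩
  · exact S.inp_intl a hinp ha
  · exact S.out_intl a hout ha

theorem notMem_intl_of_mem_inp_union_out (S : MIO A) {a : A} (ha : a ∈ S.inp ∪ S.out) :
    a ∉ S.intl :=
  ha.elim (S.inp_intl a) (S.out_intl a)

theorem tauMustStar_eq (S : MIO A) : S.tauMustStar = TauStar S.intl S.must := rfl

theorem tauMayStar_eq (S : MIO A) : S.tauMayStar = TauStar S.intl S.may := rfl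

theorem syncComp_must {S T : MIO A} (h : Composable S T) :
    (syncComp S T h).must = syncStep S.act T.act S.must T.must := rfl

theorem syncComp_may {S T : MIO A} (h : Composable S T) :
    (syncComp S T h).may = syncStep S.act T.act S.may T.may := rfl

theorem weakRefines_iff {S T : MIO A} : WeakRefines S T ↔ SigEq S T ∧
    ∃ R : S.State → T.State → Prop, R S.start T.start ∧
      IsWeakSim T.act T.intl T.must S.must (flip R) ∧ IsWeakSim T.act T.intl S.may T.may R := by
  refine and_congr_right fun ⟨hinp, hout, hintl⟩ =>
    exists_congr fun R => and_congr_right fun _ => ?_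
  rw [act, isWeakSim_union_iff fun _ => T.notMem_intl_of_mem_inp_union_out,
    isWeakSim_union_iff fun _ => T.notMem_intl_of_mem_inp_union_out]
  simp only [tauMustStar_eq, tauMayStar_eq, flip, hinp, hout, hintl]
  exact ⟨fun h => ⟨fun t s hst => ⟨(h s t hst).1, (h s t hst).2.1⟩, fun s t hst => (h s t hst).2.2⟩,
    fun h s t hst => ⟨(h.1 t s hst).1, (h.1 t s hst).2, h.2 s t hst⟩⟩

theorem WeakRefines.refl (S : MIO A) : WeakRefines S S := by
  have hflip : flip (@Eq S.State) = Eq := funext₂ fun _ _ => propext eq_comm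
  exact weakRefines_iff.2 ⟨.refl S, Eq, rfl, hflip ▸ .refl, .refl⟩

theorem WeakRefines.rename {S' S : MIO A} (h : WeakRefines S' S) (f : A → B)
    (hf : Function.Injective f) : WeakRefines (rename f hf S') (rename f hf S) := by
  obtain ⟨hsig, R, hstart, hmust, hmay⟩ := weakRefines_iff.1 h
  rw [weakRefines_iff, act_rename]
  exact ⟨hsig.rename f hf, R, hstart, hmust.map hf, hmay.map hf⟩

theorem WeakRefines.syncComp {S' S T' T : MIO A} (hS : WeakRefines S' S) (hT : WeakRefines T' T)
    (hc' : Composable S' T') (hc : Composable S T) :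
    WeakRefines (syncComp S' T' hc') (syncComp S T hc) := by
  obtain ⟨hsigS, R₁, hstart₁, hmust₁, hmay₁⟩ := weakRefines_iff.1 hS
  obtain ⟨hsigT, R₂, hstart₂, hmust₂, hmay₂⟩ := weakRefines_iff.1 hT
  have hintlS := hc.intl_subset
  have hintlT := hc.symm.intl_subset
  rw [weakRefines_iff, syncComp_must, syncComp_must, syncComp_may, syncComp_may, hsigS.act_eq,
    hsigT.act_eq]
  exact ⟨hsigS.syncComp hsigT hc' hc, fun p q => R₁ p.1 q.1 ∧ R₂ p.2 q.2, ⟨hstart₁, hstart₂⟩,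
    (hmust₁.syncStep hmust₂ hintlS hintlT).mono (Set.subset_univ _),
    (hmay₁.syncStep hmay₂ hintlS hintlT).mono (Set.subset_univ _)⟩

end MIO

open MIO

theorem weakRefines_Omega_general (A : Type) (S S' : MIO A) (o : Set A)
    (ho : o ⊆ S.out) (ho' : o ⊆ S'.out)
    (h : WeakRefines S' S) :
    WeakRefines (Omega o S' ho') (Omega o S ho) :=
  (h.rename (tagged o) (tagged_injective o)).syncComp (.refl (queueMIO o)) _ _

/-- Weak modal refinement is preserved by adding output queues. -/
theorem weakRefines_Omega (A : Type) (S S' : MIO A) (o : Set A)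
    (hsig : SigEq S' S) (ho : o ⊆ S.out) (ho' : o ⊆ S'.out)
    (h : WeakRefines S' S) :
    WeakRefines (Omega o S' ho') (Omega o S ho) :=
  weakRefines_Omega_general A S S' o ho ho' h
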